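/- Let C ⊆ [0,1] be the ternary Cantor set. For 0 < t < 1/6, the number of bounded complementary intervals of C of length greater than 2t equals 2^{n(t)} − 1, where n(t) = ⌈−log₃(2t)⌉ − 1. Consequently the basic function β₀(C;t) = 1 + #{complementary intervals of length > 2t} satisfies β₀(C;t) = 2^{{log₃(2t)}−1} · (2t)^{−log₃2} for 0 < t < 1/6, where {·} denotes fractional part. In particular, inf{q : limsup_{t→0⁺} t^q β₀(C;t) = 0} = log₃ 2. -/
import Mathlib


open Filter Set Topology

noncomputable section

/-- The number of bounded complementary intervals of the ternary Cantor set of length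
greater than `2t`: for each `k ≥ 1` there are `2^{k-1}` such intervals of length
`3^{-k}` (indexed here by pairs `(k-1, i)` with `i < 2^{k-1}`). -/
def cantorCount (t : ℝ) : ℕ :=
  Set.ncard {p : ℕ × ℕ | p.2 < 2 ^ p.1 ∧ 2 * t < (3 : ℝ) ^ (-(p.1 + 1 : ℤ))}

lemma two_pow_sum (n : ℕ) : ∑ k ∈ Finset.range n, 2 ^ k = 2 ^ n - 1 := by
  induction n with
  | zero => simp
  | succ n ih =>
    have h : 1 ≤ 2 ^ n := Nat.one_le_two_pow
    rw [Finset.sum_range_succ, ih, pow_succ]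
    omega

lemma cantorCount_eq (t : ℝ) (ht : t ∈ Set.Ioo (0:ℝ) (1/6)) :
    cantorCount t = 2 ^ ((⌈-Real.logb 3 (2 * t)⌉ - 1).toNat) - 1 := by
  obtain ⟨ht0, ht6⟩ := ht
  have h2t : 0 < 2 * t := by linarith
  set l := Real.logb 3 (2 * t) with hl
  set n : ℕ := (⌈-l⌉ - 1).toNat with hn
  have key : ∀ k : ℕ, (2 * t < (3 : ℝ) ^ (-(k + 1 : ℤ))) ↔ k < n := by
    intro k
    have h1 : (2 * t < (3 : ℝ) ^ (-(k + 1 : ℤ))) ↔ l < ((-((k:ℤ) + 1) : ℤ) : ℝ) := by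
      rw [← Real.rpow_intCast 3 (-(k + 1 : ℤ))]
      exact (Real.logb_lt_iff_lt_rpow (b := 3) (by norm_num) h2t).symm
    rw [h1]
    have h2 : l < ((-((k:ℤ) + 1) : ℤ) : ℝ) ↔ ((k : ℤ) + 1 : ℝ) < -l := by
      push_cast
      constructor <;> intro <;> linarith
    rw [h2]
    have h3 : ((k : ℤ) + 1 : ℝ) < -l ↔ (k : ℤ) + 1 < ⌈-l⌉ := by
      rw [Int.lt_ceil]; push_cast; rfl
    rw [h3, hn]
    omega
  classical
  have hset : {p : ℕ × ℕ | p.2 < 2 ^ p.1 ∧ 2 * t < (3 : ℝ) ^ (-(p.1 + 1 : ℤ))} =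
      ↑((Finset.range n).biUnion fun k => {k} ×ˢ Finset.range (2 ^ k)) := by
    ext p
    simp only [Finset.coe_biUnion, Finset.mem_coe, Finset.mem_biUnion, Finset.mem_range,
      Finset.mem_product, Finset.mem_singleton, Set.mem_setOf_eq, Set.mem_iUnion]
    constructor
    · rintro ⟨hp2, hp3⟩
      exact ⟨p.1, (key p.1).1 hp3, rfl, hp2⟩
    · rintro ⟨k, hk, rfl, hp2⟩
      exact ⟨hp2, (key p.1).2 hk⟩
  rw [cantorCount, hset, Set.ncard_coe_finset, Finset.card_biUnion, ← two_pow_sum]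
  · refine Finset.sum_congr rfl fun k _ => ?_
    simp
  · intro a _ b _ hab
    simp only [Finset.disjoint_left, Finset.mem_product, Finset.mem_singleton]
    rintro p ⟨rfl, -⟩ ⟨rfl, -⟩
    exact hab rfl

lemma beta_eq (t : ℝ) (ht : t ∈ Set.Ioo (0:ℝ) (1/6)) :
    (1 + cantorCount t : ℝ) =
      2 ^ (Int.fract (Real.logb 3 (2 * t)) - 1) * (2 * t) ^ (-Real.logb 3 2) := by
  obtain ⟨ht0, ht6⟩ := ht
  have h2t : 0 < 2 * t := by linarith
  set l := Real.logb 3 (2 * t) with hl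
  have hlneg : l < 0 := Real.logb_neg (by norm_num) h2t (by linarith)
  have hceil : (1 : ℤ) ≤ ⌈-l⌉ := by
    have : (0:ℝ) < -l := by linarith
    exact Int.ceil_pos.mpr this
  have hncast : (((⌈-l⌉ - 1).toNat : ℕ) : ℝ) = (⌈-l⌉ : ℝ) - 1 := by
    have h := Int.toNat_of_nonneg (show (0:ℤ) ≤ ⌈-l⌉ - 1 by omega)
    rw [← Int.cast_natCast ((⌈-l⌉ - 1).toNat), h]
    push_cast
    ring
  rw [cantorCount_eq t ⟨ht0, ht6⟩]
  have hcast : (1 + ((2 ^ ((⌈-l⌉ - 1).toNat) - 1 : ℕ) : ℝ)) = (2:ℝ) ^ ((⌈-l⌉ - 1).toNat) := by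
    have h1 : (1:ℕ) ≤ 2 ^ ((⌈-l⌉ - 1).toNat) := Nat.one_le_two_pow
    push_cast [h1]
    ring
  rw [hcast, ← Real.rpow_natCast 2 ((⌈-l⌉ - 1).toNat),
    Real.rpow_def_of_pos (by norm_num : (0:ℝ) < 2),
    Real.rpow_def_of_pos (by norm_num : (0:ℝ) < 2),
    Real.rpow_def_of_pos h2t, ← Real.exp_add]
  congr 1
  rw [hncast, Int.fract]
  have hfloor : ((⌊l⌋ : ℤ) : ℝ) = -((⌈-l⌉ : ℤ) : ℝ) := by
    rw [show l = -(-l) by ring, Int.floor_neg]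
    push_cast
    ring_nf
  rw [hfloor]
  have hlog3 : Real.log 3 ≠ 0 := ne_of_gt (Real.log_pos (by norm_num))
  rw [hl, Real.logb, Real.logb]
  field_simp
  ring

lemma beta_le (t : ℝ) (ht : t ∈ Set.Ioo (0:ℝ) (1/6)) :
    (1 + cantorCount t : ℝ) ≤ (2 * t) ^ (-Real.logb 3 2) := by
  obtain ⟨ht0, ht6⟩ := ht
  have h2t : 0 < 2 * t := by linarith
  rw [beta_eq t ⟨ht0, ht6⟩]
  have h1 : (2:ℝ) ^ (Int.fract (Real.logb 3 (2 * t)) - 1) ≤ 1 := by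
    have := Int.fract_lt_one (Real.logb 3 (2 * t))
    calc (2:ℝ) ^ (Int.fract (Real.logb 3 (2 * t)) - 1) ≤ (2:ℝ) ^ (0:ℝ) :=
      Real.rpow_le_rpow_of_exponent_le (by norm_num) (by linarith)
    _ = 1 := Real.rpow_zero 2
  calc (2:ℝ) ^ (Int.fract (Real.logb 3 (2 * t)) - 1) * (2 * t) ^ (-Real.logb 3 2)
      ≤ 1 * (2 * t) ^ (-Real.logb 3 2) := by
        apply mul_le_mul_of_nonneg_right h1 (Real.rpow_nonneg h2t.le _)
    _ = (2 * t) ^ (-Real.logb 3 2) := one_mul _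

lemma le_beta (t : ℝ) (ht : t ∈ Set.Ioo (0:ℝ) (1/6)) :
    (2:ℝ) ^ (-1 : ℝ) * (2 * t) ^ (-Real.logb 3 2) ≤ (1 + cantorCount t : ℝ) := by
  obtain ⟨ht0, ht6⟩ := ht
  have h2t : 0 < 2 * t := by linarith
  rw [beta_eq t ⟨ht0, ht6⟩]
  have h1 : (2:ℝ) ^ (-1:ℝ) ≤ (2:ℝ) ^ (Int.fract (Real.logb 3 (2 * t)) - 1) := by
    have := Int.fract_nonneg (Real.logb 3 (2 * t))
    exact Real.rpow_le_rpow_of_exponent_le (by norm_num) (by linarith)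
  exact mul_le_mul_of_nonneg_right h1 (Real.rpow_nonneg h2t.le _)

lemma eventually_Ioo : ∀ᶠ t : ℝ in 𝓝[>] 0, t ∈ Set.Ioo (0:ℝ) (1/6) :=
  Ioo_mem_nhdsGT (by norm_num)

lemma limsup_zero_of_gt {q : ℝ} (hq : Real.logb 3 2 < q) :
    Filter.limsup (fun t : ℝ => ((t ^ q * (1 + cantorCount t : ℝ) : ℝ) : EReal))
      (𝓝[>] 0) = (0 : EReal) := by
  set α := Real.logb 3 2 with hα
  have hreal : Tendsto (fun t : ℝ => t ^ q * (1 + cantorCount t : ℝ)) (𝓝[>] 0) (𝓝 0) := by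
    have hg : Tendsto (fun t : ℝ => (2:ℝ) ^ (-α) * t ^ (q - α)) (𝓝[>] 0) (𝓝 0) := by
      have h1 : Tendsto (fun t : ℝ => t ^ (q - α)) (𝓝[>] 0) (𝓝 0) := by
        have hc : ContinuousAt (fun x : ℝ => x ^ (q - α)) 0 :=
          Real.continuousAt_rpow_const 0 (q - α) (Or.inr (by linarith))
        have h2 : Tendsto (fun x : ℝ => x ^ (q - α)) (𝓝[>] 0) (𝓝 ((0:ℝ) ^ (q - α))) :=
          hc.tendsto.mono_left (nhdsWithin_le_nhds (s := Set.Ioi (0:ℝ)))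
        rwa [Real.zero_rpow (ne_of_gt (by linarith : (0:ℝ) < q - α))] at h2
      have := h1.const_mul ((2:ℝ) ^ (-α))
      simpa using this
    apply squeeze_zero' (g := fun t : ℝ => (2:ℝ) ^ (-α) * t ^ (q - α)) ?_ ?_ hg
    · filter_upwards [eventually_Ioo] with t ht
      have ht0 := ht.1
      positivity
    · filter_upwards [eventually_Ioo] with t ht
      have ht0 := ht.1
      have h2t : 0 < 2 * t := by linarith
      calc t ^ q * (1 + cantorCount t : ℝ) ≤ t ^ q * ((2 * t) ^ (-α)) := by
            apply mul_le_mul_of_nonneg_left (beta_le t ht) (Real.rpow_nonneg ht0.le _)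
        _ = (2:ℝ) ^ (-α) * t ^ (q - α) := by
            rw [Real.mul_rpow (by norm_num) ht0.le, show q - α = q + (-α) by ring,
              Real.rpow_add ht0]
            ring
  have : Tendsto (fun t : ℝ => ((t ^ q * (1 + cantorCount t : ℝ) : ℝ) : EReal)) (𝓝[>] 0)
      (𝓝 ((0:ℝ) : EReal)) := EReal.tendsto_coe.mpr hreal
  rw [EReal.coe_zero] at this
  exact this.limsup_eq

lemma limsup_ne_zero_of_le {q : ℝ} (hq : q ≤ Real.logb 3 2) :
    Filter.limsup (fun t : ℝ => ((t ^ q * (1 + cantorCount t : ℝ) : ℝ) : EReal))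
      (𝓝[>] 0) ≠ (0 : EReal) := by
  set α := Real.logb 3 2 with hα
  set c : ℝ := (2:ℝ) ^ (-1 - α) with hc
  have hcpos : 0 < c := Real.rpow_pos_of_pos (by norm_num) _
  have hev : ∀ᶠ t : ℝ in 𝓝[>] 0,
      (c : EReal) ≤ ((t ^ q * (1 + cantorCount t : ℝ) : ℝ) : EReal) := by
    filter_upwards [eventually_Ioo] with t ht
    rw [EReal.coe_le_coe_iff]
    have ht0 := ht.1
    have ht1 : t < 1 := by linarith [ht.2]
    have h2t : 0 < 2 * t := by linarith
    have hb := le_beta t ht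
    have h1 : (2:ℝ) ^ (-1:ℝ) * (2 * t) ^ (-α) = c * t ^ (-α) := by
      rw [Real.mul_rpow (by norm_num) ht0.le, hc, show (-1 : ℝ) - α = -1 + -α by ring,
        Real.rpow_add (by norm_num : (0:ℝ) < 2)]
      ring
    have hpow1 : (1:ℝ) ≤ t ^ (q - α) := by
      have h := Real.rpow_le_rpow_of_exponent_ge ht0 ht1.le (show q - α ≤ 0 by linarith)
      rwa [Real.rpow_zero] at h
    calc c = c * 1 := (mul_one c).symm
      _ ≤ c * t ^ (q - α) := mul_le_mul_of_nonneg_left hpow1 hcpos.le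
      _ = t ^ q * ((2:ℝ) ^ (-1:ℝ) * (2 * t) ^ (-α)) := by
          rw [h1, show q - α = q + -α by ring, Real.rpow_add ht0]
          ring
      _ ≤ t ^ q * (1 + cantorCount t : ℝ) :=
          mul_le_mul_of_nonneg_left hb (Real.rpow_nonneg ht0.le _)
  intro h0
  have hle : (c : EReal) ≤
      Filter.limsup (fun t : ℝ => ((t ^ q * (1 + cantorCount t : ℝ) : ℝ) : EReal)) (𝓝[>] 0) := by
    calc (c : EReal) = Filter.limsup (fun _ : ℝ => (c : EReal)) (𝓝[>] 0) :=
          (Filter.limsup_const _).symm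
      _ ≤ _ := Filter.limsup_le_limsup hev
  rw [h0] at hle
  have : c ≤ 0 := by exact_mod_cast hle
  linarith

/-- for the ternary Cantor set `C` and `0 < t < 1/6`, the number of
complementary intervals of length `> 2t` equals `2^{n(t)} − 1` with
`n(t) = ⌈−log₃(2t)⌉ − 1`; consequently the basic function
`β₀(C;t) = 1 + cantorCount t` satisfies
`β₀(C;t) = 2^{{log₃(2t)}−1}·(2t)^{−log₃2}`, and the associated scaling exponent is
`log₃ 2`. -/
theorem cantor_basic_function :
    (∀ t ∈ Set.Ioo (0:ℝ) (1/6),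
      cantorCount t = 2 ^ ((⌈-Real.logb 3 (2 * t)⌉ - 1).toNat) - 1) ∧
    (∀ t ∈ Set.Ioo (0:ℝ) (1/6),
      (1 + cantorCount t : ℝ) =
        2 ^ (Int.fract (Real.logb 3 (2 * t)) - 1) * (2 * t) ^ (-Real.logb 3 2)) ∧
    sInf {q : ℝ |
        Filter.limsup (fun t : ℝ => ((t ^ q * (1 + cantorCount t : ℝ) : ℝ) : EReal))
          (𝓝[>] 0) = (0 : EReal)} = Real.logb 3 2 := by
  refine ⟨fun t ht => cantorCount_eq t ht, fun t ht => beta_eq t ht, ?_⟩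
  have hset : {q : ℝ |
      Filter.limsup (fun t : ℝ => ((t ^ q * (1 + cantorCount t : ℝ) : ℝ) : EReal))
        (𝓝[>] 0) = (0 : EReal)} = Set.Ioi (Real.logb 3 2) := by
    ext q
    simp only [Set.mem_setOf_eq, Set.mem_Ioi]
    constructor
    · intro h
      by_contra hq
      exact limsup_ne_zero_of_le (not_lt.mp hq) h
    · exact fun h => limsup_zero_of_gt h
  rw [hset]
  exact csInf_Ioi
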